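/- For t = (t₁, t₂) ∈ ℝ² with t² = t₁² + t₂², define vectors in ℝ⁵: P₁₁ = (4/(t²+1)⁴)·(4t₂(1−t²−2t₁²), 8t₁(1−t₁²), 4t₁t₂(t₁²−t₂²−3), t⁴−8t₁²t₂²+6t₂²−6t₁²+1, √3(t⁴−2t²−4t₁²+1)), P₂₂ = (4/(t²+1)⁴)·(8t₂(1−t₂²), 4t₁(1−t²−2t₂²), 4t₁t₂(t₂²−t₁²−3), 6t₂²−6t₁²+8t₁²t₂²−t⁴−1, √3(t⁴−2t²−4t₂²+1)), and P₁₂ = (4/(t²+1)⁴)·(2t₁(t²−4t₂²+1), 2t₂(t²−4t₁²+1), 8t₁²t₂²−t⁴+1, 4t₁t₂(t₁²−t₂²), −4√3·t₁t₂), where t⁴ = (t²)². Then ⟨P_{ik}, P_{jk}⟩ = (3δ_{ik}+1)·(16δ_{ij}/(t²+1)⁴) for all i,j,k ∈ {1,2}, where P_{21} = P_{12}. -/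

import Mathlib

open scoped RealInnerProductSpace

/-- `Π̄(e₁,e₁)` for the second standard immersion, in stereographic coordinates. -/
noncomputable def P11 (t₁ t₂ : ℝ) : EuclideanSpace ℝ (Fin 5) :=
  (4 / (t₁ ^ 2 + t₂ ^ 2 + 1) ^ 4) • (WithLp.equiv 2 (Fin 5 → ℝ)).symm
    ![4 * t₂ * (1 - (t₁ ^ 2 + t₂ ^ 2) - 2 * t₁ ^ 2),
      8 * t₁ * (1 - t₁ ^ 2),
      4 * t₁ * t₂ * (t₁ ^ 2 - t₂ ^ 2 - 3),
      (t₁ ^ 2 + t₂ ^ 2) ^ 2 - 8 * t₁ ^ 2 * t₂ ^ 2 + 6 * t₂ ^ 2 - 6 * t₁ ^ 2 + 1,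
      Real.sqrt 3 * ((t₁ ^ 2 + t₂ ^ 2) ^ 2 - 2 * (t₁ ^ 2 + t₂ ^ 2) - 4 * t₁ ^ 2 + 1)]

/-- `Π̄(e₂,e₂)` for the second standard immersion, in stereographic coordinates. -/
noncomputable def P22 (t₁ t₂ : ℝ) : EuclideanSpace ℝ (Fin 5) :=
  (4 / (t₁ ^ 2 + t₂ ^ 2 + 1) ^ 4) • (WithLp.equiv 2 (Fin 5 → ℝ)).symm
    ![8 * t₂ * (1 - t₂ ^ 2),
      4 * t₁ * (1 - (t₁ ^ 2 + t₂ ^ 2) - 2 * t₂ ^ 2),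
      4 * t₁ * t₂ * (t₂ ^ 2 - t₁ ^ 2 - 3),
      6 * t₂ ^ 2 - 6 * t₁ ^ 2 + 8 * t₁ ^ 2 * t₂ ^ 2 - (t₁ ^ 2 + t₂ ^ 2) ^ 2 - 1,
      Real.sqrt 3 * ((t₁ ^ 2 + t₂ ^ 2) ^ 2 - 2 * (t₁ ^ 2 + t₂ ^ 2) - 4 * t₂ ^ 2 + 1)]

/-- `Π̄(e₁,e₂)` for the second standard immersion, in stereographic coordinates. -/
noncomputable def P12 (t₁ t₂ : ℝ) : EuclideanSpace ℝ (Fin 5) :=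
  (4 / (t₁ ^ 2 + t₂ ^ 2 + 1) ^ 4) • (WithLp.equiv 2 (Fin 5 → ℝ)).symm
    ![2 * t₁ * ((t₁ ^ 2 + t₂ ^ 2) - 4 * t₂ ^ 2 + 1),
      2 * t₂ * ((t₁ ^ 2 + t₂ ^ 2) - 4 * t₁ ^ 2 + 1),
      8 * t₁ ^ 2 * t₂ ^ 2 - (t₁ ^ 2 + t₂ ^ 2) ^ 2 + 1,
      4 * t₁ * t₂ * (t₁ ^ 2 - t₂ ^ 2),
      -4 * Real.sqrt 3 * t₁ * t₂]



/-- The matrix of second fundamental form vectors. -/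
noncomputable def Pmat (t₁ t₂ : ℝ) : Fin 2 → Fin 2 → EuclideanSpace ℝ (Fin 5) :=
  fun i j =>
    if i = 0 then (if j = 0 then P11 t₁ t₂ else P12 t₁ t₂)
    else (if j = 0 then P12 t₁ t₂ else P22 t₁ t₂)

/-!
Each `Pᵢⱼ` is `(4 / (t² + 1)⁴) • v` for a polynomial vector `v`, so every inner product is
`16 / (t² + 1)⁸` times the Euclidean pairing of two polynomial vectors. These pairings are
`4 (t² + 1)⁴` for `P₁₁, P₂₂`, `(t² + 1)⁴` for `P₁₂`, and `0` between `P₁₂` and `P₁₁, P₂₂`: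
polynomial identities once `√3² = 3` is used.
-/

lemma inner_smul_toLp_smul_toLp {ι : Type*} [Fintype ι] (c : ℝ) (v w : ι → ℝ) :
    ⟪c • (WithLp.equiv 2 (ι → ℝ)).symm v, c • (WithLp.equiv 2 (ι → ℝ)).symm w⟫
      = c ^ 2 * ∑ i, v i * w i := by
  rw [real_inner_smul_left, real_inner_smul_right, ← mul_assoc, ← sq]
  simp [PiLp.inner_apply, mul_comm]

lemma inner_smul_toLp_smul_toLp_of_sum_eq {ι : Type*} [Fintype ι] {s m : ℝ} {v w : ι → ℝ}
    (h : ∑ i, v i * w i = m * (s + 1) ^ 4) :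
    ⟪(4 / (s + 1) ^ 4) • (WithLp.equiv 2 (ι → ℝ)).symm v,
        (4 / (s + 1) ^ 4) • (WithLp.equiv 2 (ι → ℝ)).symm w⟫ = 16 * m / (s + 1) ^ 4 := by
  rw [inner_smul_toLp_smul_toLp, h]
  field_simp
  ring

lemma sqrt_three_sq : √3 ^ 2 = 3 := Real.sq_sqrt (by norm_num)

section

variable (t₁ t₂ : ℝ)

lemma inner_P11_self : ⟪P11 t₁ t₂, P11 t₁ t₂⟫ = 16 * 4 / (t₁ ^ 2 + t₂ ^ 2 + 1) ^ 4 :=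
  inner_smul_toLp_smul_toLp_of_sum_eq <| by
    simp only [Fin.sum_univ_five, Matrix.cons_val]
    linear_combination
      ((t₁ ^ 2 + t₂ ^ 2) ^ 2 - 2 * (t₁ ^ 2 + t₂ ^ 2) - 4 * t₁ ^ 2 + 1) ^ 2 * sqrt_three_sq

lemma inner_P22_self : ⟪P22 t₁ t₂, P22 t₁ t₂⟫ = 16 * 4 / (t₁ ^ 2 + t₂ ^ 2 + 1) ^ 4 :=
  inner_smul_toLp_smul_toLp_of_sum_eq <| by
    simp only [Fin.sum_univ_five, Matrix.cons_val]
    linear_combination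
      ((t₁ ^ 2 + t₂ ^ 2) ^ 2 - 2 * (t₁ ^ 2 + t₂ ^ 2) - 4 * t₂ ^ 2 + 1) ^ 2 * sqrt_three_sq

lemma inner_P12_self : ⟪P12 t₁ t₂, P12 t₁ t₂⟫ = 16 * 1 / (t₁ ^ 2 + t₂ ^ 2 + 1) ^ 4 :=
  inner_smul_toLp_smul_toLp_of_sum_eq <| by
    simp only [Fin.sum_univ_five, Matrix.cons_val]
    linear_combination 16 * t₁ ^ 2 * t₂ ^ 2 * sqrt_three_sq

lemma inner_P11_P12 : ⟪P11 t₁ t₂, P12 t₁ t₂⟫ = 0 := by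
  rw [P11, P12, inner_smul_toLp_smul_toLp_of_sum_eq (m := 0), mul_zero, zero_div]
  simp only [Fin.sum_univ_five, Matrix.cons_val]
  linear_combination
    -4 * t₁ * t₂ * ((t₁ ^ 2 + t₂ ^ 2) ^ 2 - 2 * (t₁ ^ 2 + t₂ ^ 2) - 4 * t₁ ^ 2 + 1) * sqrt_three_sq

lemma inner_P12_P22 : ⟪P12 t₁ t₂, P22 t₁ t₂⟫ = 0 := by
  rw [P22, P12, inner_smul_toLp_smul_toLp_of_sum_eq (m := 0), mul_zero, zero_div]
  simp only [Fin.sum_univ_five, Matrix.cons_val]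
  linear_combination
    -4 * t₁ * t₂ * ((t₁ ^ 2 + t₂ ^ 2) ^ 2 - 2 * (t₁ ^ 2 + t₂ ^ 2) - 4 * t₂ ^ 2 + 1) * sqrt_three_sq

end

/-- `⟨P_{ik}, P_{jk}⟩ = (3δ_{ik} + 1) · 16 δ_{ij} / (t² + 1)⁴` for all `i, j, k`. -/
theorem stmt14 (t₁ t₂ : ℝ) (i j k : Fin 2) :
    ⟪Pmat t₁ t₂ i k, Pmat t₁ t₂ j k⟫
      = (3 * (if i = k then (1 : ℝ) else 0) + 1) *
        (16 * (if i = j then (1 : ℝ) else 0) / (t₁ ^ 2 + t₂ ^ 2 + 1) ^ 4) := by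
  fin_cases i <;> fin_cases j <;> fin_cases k <;>
    simp only [Pmat, Fin.zero_eta, Fin.mk_one, Fin.isValue, Fin.reduceEq, ↓reduceIte,
      inner_P11_self, inner_P22_self, inner_P12_self, inner_P11_P12, inner_P12_P22,
      real_inner_comm (P11 t₁ t₂) (P12 t₁ t₂), real_inner_comm (P12 t₁ t₂) (P22 t₁ t₂)] <;>
    ring
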